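/- arXiv:2003.03137 — 5 statements merged into one kernel-verified Lean document; each statement's English description precedes it below -/
import Mathlib

section
/- Dissipation theorem: if Y is an infinitesimal dynamical symmetry of a contact Hamiltonian system (M,η,H), i.e. [Y, X_H] = 0, then F = −i(Y)η is a dissipated quantity: L_{X_H} F = −(L_R H)·F. -/
/- An algebraic model of an (exact) contact manifold `(M, η)`:
`VF` is the space of (smooth) vector fields on `M`, `lie` the Lie bracket,
`D X f` the Lie derivative (directional derivative) of a function `f` along `X`,
`η` the contact 1-form and `dη` its exterior differential, both evaluated on
vector fields.  The contact condition `η ∧ (dη)^n` is a volume form is recorded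
through its standard pointwise consequence `nondeg`:
a vector field annihilated by both `η` and `dη` vanishes. -/
structure ContactManifold where
  M : Type
  VF : Type
  instVF : AddCommGroup VF
  lie : VF → VF → VF
  D : VF → (M → ℝ) → (M → ℝ)
  η : VF → M → ℝ
  dη : VF → VF → M → ℝ
  η_add : ∀ X Y, η (X + Y) = η X + η Y
  dη_add_left : ∀ X Y Z, dη (X + Y) Z = dη X Z + dη Y Z
  D_add_left : ∀ X Y f, D (X + Y) f = D X f + D Y f
  D_add : ∀ X f g, D X (f + g) = D X f + D X g
  D_mul : ∀ X f g, D X (f * g) = D X f * g + f * D X g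
  D_lieRule : ∀ X Y f, D (lie X Y) f = D X (D Y f) - D Y (D X f)
  dη_formula : ∀ X Y, dη X Y = D X (η Y) - D Y (η X) - η (lie X Y)
  dη_antisymm : ∀ X Y, dη X Y = - dη Y X
  nondeg : ∀ X, η X = 0 → (∀ Y, dη X Y = 0) → X = 0

attribute [instance] ContactManifold.instVF

/- A contact Hamiltonian system `(M, η, H)`: a contact manifold together with its
Reeb vector field `R` (characterized by `i(R)dη = 0`, `i(R)η = 1`), a Hamiltonian
function `H`, and the contact Hamiltonian vector field `X_H`, the unique solution of
`i(X_H)dη = dH − (L_R H)η` and `i(X_H)η = −H`. -/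
structure ContactHamiltonianSystem extends ContactManifold where
  R : VF
  R_ker : ∀ Y, dη R Y = 0
  R_norm : η R = 1
  H : M → ℝ
  XH : VF
  XH_dη : ∀ Y, dη XH Y = D Y H - D R H * η Y
  XH_η : η XH = - H

/-- Dissipation theorem: if `Y` is an infinitesimal dynamical
symmetry (`[Y, X_H] = 0`), then `F = −i(Y)η` is a dissipated quantity:
`L_{X_H} F = −(L_R H)·F`. -/
theorem dissipation_theorem (C : ContactHamiltonianSystem)
    (Y : C.VF) (hY : C.lie Y C.XH = 0) :
    C.D C.XH (-(C.η Y)) = -(C.D C.R C.H) * (-(C.η Y)) := by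
  have hD0 : ∀ X : C.VF, C.D X (0 : C.M → ℝ) = 0 := by
    intro X
    have h := C.D_add X 0 0
    rw [add_zero] at h
    exact (left_eq_add.mp h)
  have hDneg : ∀ (X : C.VF) (f : C.M → ℝ), C.D X (-f) = -(C.D X f) := by
    intro X f
    have h := C.D_add X f (-f)
    rw [add_neg_cancel, hD0] at h
    exact eq_neg_of_add_eq_zero_right h.symm
  have hη0 : C.η (0 : C.VF) = 0 := by
    have h := C.η_add 0 0
    rw [add_zero] at h
    exact (left_eq_add.mp h)
  have h1 := C.dη_formula Y C.XH
  rw [hY, hη0, C.XH_η, C.dη_antisymm Y C.XH, C.XH_dη Y, hDneg] at h1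
  rw [hDneg]
  linear_combination -h1
end

section
/- Let (M,η,H) be a contact Hamiltonian system and X a vector field on M. Then i(X)η is a dissipated quantity (L_{X_H}(i(X)η) = −(L_R H)·i(X)η) if and only if i([X, X_H])η = 0. -/
/-- `i(X)η` is a dissipated quantity iff `i([X, X_H])η = 0`. -/
theorem dissipated_iff_bracket_horizontal (C : ContactHamiltonianSystem)
    (X : C.VF) :
    C.D C.XH (C.η X) = -(C.D C.R C.H) * C.η X ↔ C.η (C.lie X C.XH) = 0 := by
  have hD0 : C.D X (0 : C.M → ℝ) = 0 := by
    have h := (C.D_add X 0 0).symm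
    simpa using h
  have hneg : C.D X (C.η C.XH) = - C.D X C.H := by
    rw [C.XH_η]
    have h := C.D_add X C.H (-C.H)
    rw [add_neg_cancel, hD0] at h
    exact (neg_eq_of_add_eq_zero_right h.symm).symm
  have hkey : C.η (C.lie X C.XH)
      = - C.D C.XH (C.η X) - C.D C.R C.H * C.η X := by
    have h1 := C.dη_formula X C.XH
    rw [C.dη_antisymm X C.XH, C.XH_dη X, hneg] at h1
    linear_combination h1
  constructor
  · intro h
    rw [hkey, h]; ring
  · intro h
    rw [hkey] at h
    linear_combination -h
end

section
/- If F₁ and F₂ are dissipated quantities of a contact Hamiltonian system (M,η,H) and F₂ is nowhere zero, then F₁/F₂ is a conserved quantity: L_{X_H}(F₁/F₂) = 0. -/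
/-- the quotient of two dissipated quantities (the denominator
being nowhere zero) is a conserved quantity. -/
theorem quotient_of_dissipated_is_conserved (C : ContactHamiltonianSystem)
    (F₁ F₂ : C.M → ℝ)
    (h₁ : C.D C.XH F₁ = -(C.D C.R C.H) * F₁)
    (h₂ : C.D C.XH F₂ = -(C.D C.R C.H) * F₂)
    (hne : ∀ m, F₂ m ≠ 0) :
    C.D C.XH (F₁ / F₂) = 0 := by
  have key : F₁ = (F₁ / F₂) * F₂ := by
    funext m
    simp [Pi.div_apply, div_mul_cancel₀ _ (hne m)]
  have h3 := C.D_mul C.XH (F₁ / F₂) F₂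
  funext m
  have e1 : C.D C.XH F₁ m = -(C.D C.R C.H) m * F₁ m := by rw [h₁]; rfl
  have e2 : C.D C.XH F₂ m = -(C.D C.R C.H) m * F₂ m := by rw [h₂]; rfl
  have e3 : C.D C.XH F₁ m = C.D C.XH (F₁ / F₂) m * F₂ m + (F₁ m / F₂ m) * C.D C.XH F₂ m := by
    conv_lhs => rw [key, h3]
    rfl
  have := hne m
  rw [e1, e2] at e3
  have hx : (F₁ m / F₂ m) * (-(C.D C.R C.H) m * F₂ m) = -(C.D C.R C.H) m * F₁ m := by
    field_simp
  have hz : C.D C.XH (F₁ / F₂) m * F₂ m = 0 := by linarith [e3, hx]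
  simp only [Pi.zero_apply]
  exact (mul_eq_zero.mp hz).resolve_right this
end

section
/- If H is nowhere zero and Y is an infinitesimal dynamical symmetry ([Y, X_H] = 0) of a contact Hamiltonian system (M,η,H), then the function (−i(Y)η)/H is a conserved quantity: L_{X_H}((−i(Y)η)/H) = 0. -/
/-- if `H` is nowhere zero and `Y` is an infinitesimal dynamical
symmetry, then `(−i(Y)η)/H` is a conserved quantity. -/
theorem conserved_from_symmetry (C : ContactHamiltonianSystem)
    (hH : ∀ m, C.H m ≠ 0) (Y : C.VF) (hY : C.lie Y C.XH = 0) :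
    C.D C.XH ((-(C.η Y)) / C.H) = 0 := by
  have D0 : ∀ X : C.VF, C.D X 0 = 0 := by
    intro X
    have h := C.D_add X 0 0
    simp only [add_zero] at h
    linear_combination -h
  have Dneg : ∀ (X : C.VF) (f : C.M → ℝ), C.D X (-f) = - C.D X f := by
    intro X f
    have h := C.D_add X f (-f)
    rw [add_neg_cancel, D0] at h
    linear_combination -h
  have η0 : C.η 0 = 0 := by
    have h := C.η_add 0 0
    simp only [add_zero] at h
    linear_combination -h
  -- D X_H H = -(H * D R H)
  have hself : C.dη C.XH C.XH = 0 := by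
    funext m
    have h := congrFun (C.dη_antisymm C.XH C.XH) m
    simp only [Pi.neg_apply] at h
    simpa using by linarith
  have hDH : C.D C.XH C.H = -(C.H * C.D C.R C.H) := by
    have h := C.XH_dη C.XH
    rw [hself, C.XH_η] at h
    linear_combination -h
  -- D X_H (η Y) = -(D R H * η Y)
  have hDηY : C.D C.XH (C.η Y) = -(C.D C.R C.H * C.η Y) := by
    have h1 := C.dη_formula Y C.XH
    rw [hY, η0, C.XH_η, Dneg] at h1
    have h2 := C.dη_antisymm Y C.XH
    rw [C.XH_dη Y] at h2
    linear_combination h1 - h2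
  set f : C.M → ℝ := (-(C.η Y)) / C.H with hf
  have hfH : f * C.H = -(C.η Y) := by
    funext m
    exact div_mul_cancel₀ _ (hH m)
  have key : C.D C.XH f * C.H = 0 := by
    have h := C.D_mul C.XH f C.H
    rw [hfH, Dneg, hDηY, hDH] at h
    linear_combination -h + C.D C.R C.H * hfH
  funext m
  have hm := congrFun key m
  simp only [Pi.mul_apply, Pi.zero_apply] at hm ⊢
  exact (mul_eq_zero.mp hm).resolve_right (hH m)
end

section
/- In the damped gravitational system on ℝ⁵, on the open set where p_x ≠ 0, the function H/p_x is a conserved quantity: L_{X_H}(H/p_x) = 0. -/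
noncomputable section

/-- `ℝ⁵` with coordinates `(x, y, p_x, p_y, s)`. -/
abbrev E5 : Type := ℝ × ℝ × ℝ × ℝ × ℝ

/-- The contact form `η = ds − p_x dx − p_y dy` at `pt` on the tangent vector `v`. -/
def η5 (pt v : E5) : ℝ := v.2.2.2.2 - pt.2.2.1 * v.1 - pt.2.2.2.1 * v.2.1

/-- `dη = dx ∧ dp_x + dy ∧ dp_y` on the tangent vectors `u`, `v`. -/
def dη5 (u v : E5) : ℝ :=
  (u.1 * v.2.2.1 - u.2.2.1 * v.1) + (u.2.1 * v.2.2.2.1 - u.2.2.2.1 * v.2.1)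

/-- The Hamiltonian `H = (p_x² + p_y²)/(2m) + m·g·y + γ·s` of a particle in a
constant gravitational field with friction. -/
def H5 (m g γ : ℝ) (pt : E5) : ℝ :=
  (pt.2.2.1 ^ 2 + pt.2.2.2.1 ^ 2) / (2 * m) + m * g * pt.2.1 + γ * pt.2.2.2.2

/-- The claimed contact Hamiltonian vector field
`X_H = (p_x/m)∂x + (p_y/m)∂y − γp_x ∂p_x − (mg + γp_y)∂p_y
      + ((p_x²+p_y²)/(2m) − mgy − γs)∂s`. -/
def X5 (m g γ : ℝ) (pt : E5) : E5 :=
  (pt.2.2.1 / m, pt.2.2.2.1 / m, -γ * pt.2.2.1, -(m * g + γ * pt.2.2.2.1),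
   (pt.2.2.1 ^ 2 + pt.2.2.2.1 ^ 2) / (2 * m) - m * g * pt.2.1 - γ * pt.2.2.2.2)

/-!
Along the contact Hamiltonian vector field, `X_H(H) = -(∂H/∂s) H = -γ H`, and `X_H(p_x) = -γ p_x`
directly from the formula for `X_H`. Two functions scaled at the same rate along a vector field
have a ratio whose derivative along it vanishes, by the quotient rule.
-/

theorem fderiv_div_apply_eq_zero_of_fderiv_apply_eq_mul {𝕜 E : Type*} [NontriviallyNormedField 𝕜]
    [NormedAddCommGroup E] [NormedSpace 𝕜 E] {f g : E → 𝕜} {x v : E} {c : 𝕜}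
    (hf : DifferentiableAt 𝕜 f x) (hg : DifferentiableAt 𝕜 g x) (hgx : g x ≠ 0)
    (hfv : fderiv 𝕜 f x v = c * f x) (hgv : fderiv 𝕜 g x v = c * g x) :
    fderiv 𝕜 (fun y => f y / g y) x v = 0 := by
  have hdiv : DifferentiableAt 𝕜 (fun y => f y / g y) x := by fun_prop (disch := exact hgx)
  have hf' : HasDerivAt (fun t : 𝕜 => f (x + t • v)) (c * f x) 0 :=
    hfv ▸ hf.hasFDerivAt.hasLineDerivAt v
  have hg' : HasDerivAt (fun t : 𝕜 => g (x + t • v)) (c * g x) 0 :=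
    hgv ▸ hg.hasFDerivAt.hasLineDerivAt v
  have hquot := hf'.fun_div hg' (by simpa using hgx)
  rw [zero_smul, add_zero, show c * f x * g x - f x * (c * g x) = 0 by ring, zero_div] at hquot
  exact (hdiv.hasFDerivAt.hasLineDerivAt v).unique hquot

theorem fderiv_H5_apply (m g γ : ℝ) (pt v : E5) :
    fderiv ℝ (H5 m g γ) pt v =
      (pt.2.2.1 * v.2.2.1 + pt.2.2.2.1 * v.2.2.2.1) / m + m * g * v.2.1 + γ * v.2.2.2.2 := by
  have hy := (hasFDerivAt_snd (𝕜 := ℝ) (p := pt)).fst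
  have hpx := (hasFDerivAt_snd (𝕜 := ℝ) (p := pt)).snd.fst
  have hpy := (hasFDerivAt_snd (𝕜 := ℝ) (p := pt)).snd.snd.fst
  have hs := (hasFDerivAt_snd (𝕜 := ℝ) (p := pt)).snd.snd.snd
  have hH := ((((hpx.pow 2).add (hpy.pow 2)).mul_const (2 * m)⁻¹).add
    ((hy.const_mul (m * g)).add (hs.const_mul γ))).congr_of_eventuallyEq
    (f₁ := H5 m g γ) (.of_forall fun q => by simp only [H5, Pi.add_apply]; ring)
  rw [hH.fderiv]
  simp only [add_apply, smul_apply,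
    ContinuousLinearMap.comp_apply, ContinuousLinearMap.coe_snd', ContinuousLinearMap.coe_fst',
    nsmul_eq_mul, smul_eq_mul]
  ring

theorem fderiv_H5_apply_X5 (m g γ : ℝ) (pt : E5) :
    fderiv ℝ (H5 m g γ) pt (X5 m g γ pt) = -γ * H5 m g γ pt := by
  rw [fderiv_H5_apply]
  simp only [X5, H5]
  ring

theorem H_over_px_conserved_general (m g γ : ℝ) (pt : E5)
    (hpx : pt.2.2.1 ≠ 0) :
    fderiv ℝ (fun q : E5 => H5 m g γ q / q.2.2.1) pt (X5 m g γ pt) = 0 := by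
  have hpx_rate : fderiv ℝ (fun q : E5 => q.2.2.1) pt (X5 m g γ pt) = -γ * pt.2.2.1 := by
    rw [(hasFDerivAt_snd (𝕜 := ℝ) (p := pt)).snd.fst.fderiv]
    simp [X5]
  exact fderiv_div_apply_eq_zero_of_fderiv_apply_eq_mul (by unfold H5; fun_prop) (by fun_prop)
    hpx (fderiv_H5_apply_X5 m g γ pt) hpx_rate

/-- on the open set where `p_x ≠ 0`, the function `H/p_x` is a
conserved quantity of the damped gravitational system: `L_{X_H}(H/p_x) = 0`. -/
theorem H_over_px_conserved (m g γ : ℝ) (hm : 0 < m) (pt : E5)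
    (hpx : pt.2.2.1 ≠ 0) :
    fderiv ℝ (fun q : E5 => H5 m g γ q / q.2.2.1) pt (X5 m g γ pt) = 0 :=
  H_over_px_conserved_general m g γ pt hpx
end
end
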